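/- W-sequence recurrence for double almost-Riordan arrays: Suppose W̃ ∈ K[[t]] satisfies b₀·f₂·(b − b₀) = b₂·t²·b·f₂ + t³·g·(b₀·(W̃∘(f₁f₂)) − b₂), where b₂ = [t²]b, and set w_j := [t^j]W̃ (so w₀ = b₂/b₀). Then for all n ≥ 2, d_{n,0} = w₀·d_{n−2,0} + w₁·d_{n−2,2} + w₂·d_{n−2,4} + ⋯ = Σ_{j≥0} w_j·d_{n−2,2j}, where the sum has only finitely many nonzero terms since d_{m,l} = 0 whenever l > m. -/

import Mathlib

/-!
Write `W = w₀ + t·W'`, so that `W∘h = w₀ + h·(W'∘h)` for `h = f₁f₂`. The coefficient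
of `t³` in the defining identity of `W` gives `b₂ = b₀w₀`; then the identity is divisible
by `b₀f₂`, leaving `b = b₀ + t²(w₀·b + t·g·f₁·(W'∘h))`. Reading off the coefficient of
`tⁿ`, the term `t·g·f₁·(W'∘h)` expands as `Σ_j w_{j+1}·t·g·f₁·hʲ`, whose summands are
exactly the even columns `2j + 2` of the array.
-/

open PowerSeries

variable {K : Type*} [Field K]

/-- Formal substitution `U ∘ h` of a power series `h` (intended with `h(0) = 0`)
into a power series `U`:  `[tⁿ](U∘h) = Σ_{j≤n} ([tʲ]U)·[tⁿ](hʲ)`. -/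
noncomputable def psComp (U h : PowerSeries K) : PowerSeries K :=
  PowerSeries.mk fun n => ∑ j ∈ Finset.range (n + 1), coeff j U * coeff n (h ^ j)

/-- The `(n,k)` entry of the double almost-Riordan array `(b | g ; f₁, f₂)`:
column 0 is `b`, column `2ℓ+1` is `t·g·(f₁f₂)^ℓ`, column `2ℓ+2` is `t·g·f₁·(f₁f₂)^ℓ`. -/
noncomputable def dar (b g f₁ f₂ : PowerSeries K) (n k : ℕ) : K :=
  if k = 0 then coeff n b
  else if k % 2 = 1 then coeff n (X * g * (f₁ * f₂) ^ ((k - 1) / 2))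
  else coeff n (X * g * f₁ * (f₁ * f₂) ^ ((k - 2) / 2))

open Finset

lemma coeff_pow_eq_zero_of_lt {h : PowerSeries K} (h0 : constantCoeff h = 0) {m j : ℕ}
    (hm : m < j) : coeff m (h ^ j) = 0 :=
  X_pow_dvd_iff.mp (pow_dvd_pow_of_dvd (X_dvd_iff.mpr h0) j) m hm

lemma trunc_psComp {h : PowerSeries K} (h0 : constantCoeff h = 0) (W : PowerSeries K) (N : ℕ) :
    trunc N (psComp W h) = trunc N (∑ j ∈ range N, C (coeff j W) * h ^ j) := by
  ext m
  rw [coeff_trunc, coeff_trunc]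
  split_ifs with hm
  · simp only [psComp, coeff_mk, map_sum, coeff_C_mul]
    refine sum_subset (range_subset_range.mpr hm) fun j _ hj => ?_
    rw [coeff_pow_eq_zero_of_lt h0 (by simpa using hj), mul_zero]
  · rfl

lemma coeff_mul_psComp {h : PowerSeries K} (h0 : constantCoeff h = 0) (A W : PowerSeries K)
    (n : ℕ) :
    coeff n (A * psComp W h) = ∑ j ∈ range (n + 1), coeff j W * coeff n (A * h ^ j) := by
  have htrunc : coeff n (A * psComp W h) =
      coeff n (A * ∑ j ∈ range (n + 1), C (coeff j W) * h ^ j) := by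
    rw [← coeff_coe_trunc_of_lt n.lt_succ_self, ← trunc_mul_trunc, trunc_psComp h0,
      trunc_mul_trunc, coeff_coe_trunc_of_lt n.lt_succ_self]
  simp only [htrunc, mul_sum, map_sum, mul_left_comm A, coeff_C_mul]

lemma psComp_eq_C_add_mul {h : PowerSeries K} (h0 : constantCoeff h = 0) (W : PowerSeries K) :
    psComp W h = C (constantCoeff W) + h * psComp (mk fun p => coeff (p + 1) W) h := by
  ext n
  rw [map_add, coeff_mul_psComp h0, sum_range_succ, psComp, coeff_mk, sum_range_succ']
  simp only [coeff_mk, ← pow_succ', coeff_pow_eq_zero_of_lt h0 n.lt_succ_self, pow_zero,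
    coeff_one, coeff_C, coeff_zero_eq_constantCoeff_apply]
  split_ifs <;> ring

lemma constantCoeff_psComp (W h : PowerSeries K) :
    constantCoeff (psComp W h) = constantCoeff W := by
  rw [← coeff_zero_eq_constantCoeff_apply, psComp, coeff_mk]
  simp

lemma coeff_two_eq_of_W {b g f₂ W h : PowerSeries K} (hb1 : coeff 1 b = 0)
    (hf₂ : constantCoeff f₂ = 0) (hg0 : constantCoeff g ≠ 0)
    (hW : C (constantCoeff b) * f₂ * (b - C (constantCoeff b)) =
        C (coeff 2 b) * X ^ 2 * b * f₂ +
          X ^ 3 * g * (C (constantCoeff b) * psComp W h - C (coeff 2 b))) :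
    coeff 2 b = constantCoeff b * constantCoeff W := by
  set P := C (constantCoeff b) * (b - C (constantCoeff b)) - C (coeff 2 b) * (X ^ 2 * b)
  have hP : X ^ 3 ∣ P := X_pow_dvd_iff.mpr fun m hm => by
    interval_cases m <;> simp [P, coeff_X_pow_mul', hb1, mul_comm (constantCoeff b)]
  have hfP : X ^ 4 ∣ f₂ * P := by
    rw [pow_succ']
    exact mul_dvd_mul (X_dvd_iff.mpr hf₂) hP
  have hcoeff3 := congrArg (coeff 3) (show f₂ * P =
      X ^ 3 * (g * (C (constantCoeff b) * psComp W h - C (coeff 2 b))) by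
    simp only [P]; linear_combination hW)
  rw [X_pow_dvd_iff.mp hfP 3 (by norm_num), ← zero_add 3, coeff_X_pow_mul,
    coeff_zero_eq_constantCoeff_apply] at hcoeff3
  simp only [map_mul, map_sub, constantCoeff_C, constantCoeff_psComp] at hcoeff3
  have hdiff := (mul_eq_zero.mp hcoeff3.symm).resolve_left hg0
  linear_combination -hdiff

lemma eq_C_add_X_sq_mul_of_W {b g f₁ f₂ W : PowerSeries K} (hb1 : coeff 1 b = 0)
    (hb0 : constantCoeff b ≠ 0) (hg0 : constantCoeff g ≠ 0) (hf₂ : constantCoeff f₂ = 0)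
    (hf₂ne : f₂ ≠ 0)
    (hW : C (constantCoeff b) * f₂ * (b - C (constantCoeff b)) =
        C (coeff 2 b) * X ^ 2 * b * f₂ +
          X ^ 3 * g * (C (constantCoeff b) * psComp W (f₁ * f₂) - C (coeff 2 b))) :
    b = C (constantCoeff b) + X ^ 2 * (C (constantCoeff W) * b +
      X * g * f₁ * psComp (mk fun p => coeff (p + 1) W) (f₁ * f₂)) := by
  have hb2 := coeff_two_eq_of_W hb1 hf₂ hg0 hW
  rw [psComp_eq_C_add_mul (by simp [hf₂]), hb2, map_mul] at hW
  have hcancel : C (constantCoeff b) * f₂ ≠ 0 := mul_ne_zero (by simpa using hb0) hf₂ne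
  apply mul_left_cancel₀ hcancel
  linear_combination hW

lemma dar_zero_right (b g f₁ f₂ : PowerSeries K) (n : ℕ) :
    dar b g f₁ f₂ n 0 = coeff n b := rfl

lemma dar_two_mul_succ (b g f₁ f₂ : PowerSeries K) (n j : ℕ) :
    dar b g f₁ f₂ n (2 * (j + 1)) = coeff n (X * g * f₁ * (f₁ * f₂) ^ j) := by
  rw [dar, if_neg (by omega), if_neg (by omega), show (2 * (j + 1) - 2) / 2 = j by omega]

lemma dar_two_mul_succ_eq_zero {b g f₁ f₂ : PowerSeries K}
    (h0 : constantCoeff (f₁ * f₂) = 0) {m j : ℕ} (hm : m ≤ j) :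
    dar b g f₁ f₂ m (2 * (j + 1)) = 0 := by
  have hdvd : X ^ (j + 1) ∣ X * g * f₁ * (f₁ * f₂) ^ j := by
    rw [pow_succ']
    exact mul_dvd_mul (dvd_mul_of_dvd_left (dvd_mul_right X g) f₁)
      (pow_dvd_pow_of_dvd (X_dvd_iff.mpr h0) j)
  rw [dar_two_mul_succ, X_pow_dvd_iff.mp hdvd m (by omega)]

lemma support_mul_dar_two_mul_subset {b g f₁ f₂ : PowerSeries K}
    (h0 : constantCoeff (f₁ * f₂) = 0) (c : ℕ → K) (m : ℕ) :
    Function.support (fun j => c j * dar b g f₁ f₂ m (2 * j)) ⊆ range (m + 2) := by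
  intro j hj
  rw [coe_range, Set.mem_Iio]
  by_contra hjm
  obtain ⟨i, rfl⟩ : ∃ i, j = i + 1 := ⟨j - 1, by omega⟩
  rw [Function.mem_support, dar_two_mul_succ_eq_zero h0 (by omega), mul_zero] at hj
  exact hj rfl

theorem dar_W_seq_general
    (b g f₁ f₂ : PowerSeries K)
    (hbe : ∀ k, coeff (2 * k + 1) b = 0)
    (hb0 : constantCoeff b ≠ 0)
    (hg0 : constantCoeff g ≠ 0)
    (hf₂o : ∀ k, coeff (2 * k) f₂ = 0)
    (hf₂1 : coeff 1 f₂ ≠ 0)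
    (W : PowerSeries K)
    (hW : C (constantCoeff b) * f₂ * (b - C (constantCoeff b)) =
        C (coeff 2 b) * X ^ 2 * b * f₂ +
          X ^ 3 * g * (C (constantCoeff b) * psComp W (f₁ * f₂) - C (coeff 2 b))) :
    ∀ n : ℕ, 2 ≤ n →
      dar b g f₁ f₂ n 0 =
        ∑ᶠ j : ℕ, coeff j W * dar b g f₁ f₂ (n - 2) (2 * j) := by
  intro n hn
  obtain ⟨m, rfl⟩ := Nat.exists_eq_add_of_le' hn
  have hf₂ : constantCoeff f₂ = 0 := by simpa using hf₂o 0
  have h0 : constantCoeff (f₁ * f₂) = 0 := by simp [hf₂]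
  have hb := eq_C_add_X_sq_mul_of_W (by simpa using hbe 0) hb0 hg0 hf₂
    (fun hf => hf₂1 (by simp [hf])) hW
  have hcoeff : coeff (m + 2) b = constantCoeff W * coeff m b +
      ∑ j ∈ range (m + 1), coeff (j + 1) W * coeff m (X * g * f₁ * (f₁ * f₂) ^ j) := by
    conv_lhs => rw [hb]
    simp only [map_add, coeff_C, if_neg (Nat.succ_ne_zero _), coeff_X_pow_mul, coeff_C_mul,
      coeff_mul_psComp h0, coeff_mk, zero_add]
  rw [Nat.add_sub_cancel, finsum_eq_sum_of_support_subset _ (support_mul_dar_two_mul_subset h0 _ m),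
    sum_range_succ', dar_zero_right, dar_zero_right, hcoeff]
  simp only [dar_two_mul_succ, coeff_zero_eq_constantCoeff_apply]
  ring

/-- W-sequence recurrence for double almost-Riordan arrays. -/
theorem dar_W_seq
    (b g f₁ f₂ : PowerSeries K)
    (hbe : ∀ k, coeff (2 * k + 1) b = 0)
    (hge : ∀ k, coeff (2 * k + 1) g = 0)
    (hb0 : constantCoeff b ≠ 0)
    (hg0 : constantCoeff g ≠ 0)
    (hf₁o : ∀ k, coeff (2 * k) f₁ = 0)
    (hf₂o : ∀ k, coeff (2 * k) f₂ = 0)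
    (hf₁1 : coeff 1 f₁ ≠ 0)
    (hf₂1 : coeff 1 f₂ ≠ 0)
    (W : PowerSeries K)
    (hW : C (constantCoeff b) * f₂ * (b - C (constantCoeff b)) =
        C (coeff 2 b) * X ^ 2 * b * f₂ +
          X ^ 3 * g * (C (constantCoeff b) * psComp W (f₁ * f₂) - C (coeff 2 b))) :
    ∀ n : ℕ, 2 ≤ n →
      dar b g f₁ f₂ n 0 =
        ∑ᶠ j : ℕ, coeff j W * dar b g f₁ f₂ (n - 2) (2 * j) :=
  dar_W_seq_general b g f₁ f₂ hbe hb0 hg0 hf₂o hf₂1 W hW
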